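/- Let $f_1,f_2,g_1,g_2\in C(\partial\Omega)$ with $f_1\le f_2$ and $g_1\le g_2$ $\mathcal{H}$-a.e., and $\psi_1\le\psi_2$, $\varphi_1\le\varphi_2$ in $C(\overline\Omega)$ with $\mathcal{K}_1(\Omega):=\mathcal{K}_{\psi_1,\varphi_1,f_1,g_1}(\Omega)\ne\varnothing$ and $\mathcal{K}_2(\Omega):=\mathcal{K}_{\psi_2,\varphi_2,f_2,g_2}(\Omega)\ne\varnothing$. If $u_1$ is the minimal strong solution to the $\mathcal{K}_1$-obstacle problem and $u_2$ is any strong solution to the $\mathcal{K}_2$-obstacle problem, then $u_1\le u_2$ $\mu$-a.e. in $\Omega$. -/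

import Mathlib

open MeasureTheory Filter Set Topology
open scoped ENNReal NNReal

section Prelude

variable {X : Type*} [MetricSpace X] [MeasurableSpace X]

/-- Pointwise (upper) local Lipschitz constant of a real valued function. -/
noncomputable def lipConst (u : X → ℝ) (x : X) : ℝ≥0∞ :=
  Filter.limsup
    (fun r : ℝ => ⨆ y ∈ Metric.ball x r, ENNReal.ofReal (|u y - u x| / r))
    (nhdsWithin (0:ℝ) (Set.Ioi 0))

/-- Total variation of `u` on `U`, defined by relaxation of the integral of the local
Lipschitz constant along locally Lipschitz approximations converging in `L¹_loc(U)`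
(the metric-measure-space BV energy of Miranda). -/
noncomputable def TV (μ : Measure X) (u : X → ℝ) (U : Set X) : ℝ≥0∞ :=
  ⨅ (v : ℕ → X → ℝ) (_ : (∀ n, LocallyLipschitz (v n)) ∧
      ∀ K : Set X, K ⊆ U → IsCompact K →
        Filter.Tendsto (fun n => ∫ x in K, |v n x - u x| ∂μ) Filter.atTop (nhds (0:ℝ))),
    Filter.liminf (fun n => ∫⁻ x in U, lipConst (v n) x ∂μ) Filter.atTop

/-- Perimeter of a set `E` in `U`. -/
noncomputable def perim (μ : Measure X) (E U : Set X) : ℝ≥0∞ :=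
  TV μ (E.indicator fun _ => (1:ℝ)) U

/-- `u` has trace `t` at the boundary point `z` of `Ω`. -/
def HasTraceAt (μ : Measure X) (Ω : Set X) (u : X → ℝ) (z : X) (t : ℝ) : Prop :=
  Filter.Tendsto (fun r : ℝ => ⨍ y in Metric.ball z r ∩ Ω, |u y - t| ∂μ)
    (nhdsWithin (0:ℝ) (Set.Ioi 0)) (nhds (0:ℝ))

/-- Codimension-one Hausdorff premeasure at scale `δ` (covers by balls of radius `< δ`). -/
noncomputable def codimOneContent (μ : Measure X) (δ : ℝ) (E : Set X) : ℝ≥0∞ :=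
  ⨅ (c : ℕ → X × ℝ) (_ : (∀ i, 0 < (c i).2 ∧ (c i).2 < δ) ∧
      E ⊆ ⋃ i, Metric.ball (c i).1 (c i).2),
    ∑' i, μ (Metric.ball (c i).1 (c i).2) / ENNReal.ofReal (c i).2

/-- Codimension-one Hausdorff measure (as a set function). -/
noncomputable def codimOneHausdorff (μ : Measure X) (E : Set X) : ℝ≥0∞ :=
  ⨆ (δ : ℝ) (_ : (0:ℝ) < δ), codimOneContent μ δ E

/-- `μ` is a (globally) doubling measure: `0 < μ(B(x,2r)) ≤ C μ(B(x,r)) < ∞`. -/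
def IsDoubling (μ : Measure X) : Prop :=
  ∃ C : ℝ≥0∞, 1 ≤ C ∧ ∀ (x : X) (r : ℝ), 0 < r →
    0 < μ (Metric.ball x (2*r)) ∧ μ (Metric.ball x (2*r)) ≤ C * μ (Metric.ball x r) ∧
      C * μ (Metric.ball x r) < ⊤

/-- `H|∂Ω` is lower codimension-1 Ahlfors regular. -/
def LowerCodimOneAR (μ H : Measure X) (Ω : Set X) : Prop :=
  ∃ C : ℝ≥0∞, 0 < C ∧ ∀ x ∈ frontier Ω, ∀ r : ℝ, 0 < r →
    r < 2 * Metric.diam (frontier Ω) →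
    C * (μ (Metric.ball x r) / ENNReal.ofReal r) ≤ H (Metric.ball x r ∩ frontier Ω)

/-- `H|∂Ω` is doubling. -/
def BoundaryDoubling (H : Measure X) (Ω : Set X) : Prop :=
  ∃ C : ℝ≥0∞, 1 ≤ C ∧ ∀ x ∈ frontier Ω, ∀ r : ℝ, 0 < r →
    H (Metric.ball x (2*r) ∩ frontier Ω) ≤ C * H (Metric.ball x r ∩ frontier Ω)

/-- `Ω` is an `A`-uniform domain. -/
def IsUniformDomain (Ω : Set X) (A : ℝ) : Prop :=
  1 ≤ A ∧ ∀ x ∈ Ω, ∀ y ∈ Ω, ∃ γ : ℝ → X, ContinuousOn γ (Set.Icc 0 1) ∧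
    γ 0 = x ∧ γ 1 = y ∧ (∀ t ∈ Set.Icc (0:ℝ) 1, γ t ∈ Ω) ∧
    eVariationOn γ (Set.Icc 0 1) ≤ ENNReal.ofReal (A * dist x y) ∧
    ∀ t ∈ Set.Icc (0:ℝ) 1,
      min (eVariationOn γ (Set.Icc 0 t)) (eVariationOn γ (Set.Icc t 1)) ≤
        ENNReal.ofReal (A * Metric.infDist (γ t) Ωᶜ)

/-- `E` is a weak solution set to the Dirichlet problem in `Ω` with boundary data `χ_F`. -/
def IsWeakSolSet (μ : Measure X) (Ω F E : Set X) : Prop :=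
  (∀ x, x ∉ Ω → (x ∈ E ↔ x ∈ F)) ∧
  ∀ E' : Set X, (∀ x, x ∉ Ω → (x ∈ E' ↔ x ∈ F)) →
    perim μ E (closure Ω) ≤ perim μ E' (closure Ω)

/-- Minimal weak solution set for boundary data `χ_F`. -/
def IsMinimalWeakSolSet (μ : Measure X) (Ω F E : Set X) : Prop :=
  IsWeakSolSet μ Ω F E ∧ ∀ E', IsWeakSolSet μ Ω F E' → μ (E \ E') = 0

/-- `∂Ω` has positive mean curvature (Lahti–Malý–Shanmugalingam–Speight). -/
def PosMeanCurvature (μ : Measure X) (Ω : Set X) : Prop :=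
  ∀ x ∈ frontier Ω, ∃ (φ : ℝ → ℝ) (rx : ℝ), 0 < rx ∧
    (∀ r, 0 < r → 0 < φ r) ∧ (∀ r s, 0 < r → r ≤ s → φ r ≤ φ s) ∧
    ∀ r : ℝ, 0 < r → r < rx → perim μ (Metric.ball x r) Set.univ < ⊤ →
      ∀ E : Set X, IsMinimalWeakSolSet μ Ω (Metric.ball x r) E →
        μ (Metric.ball x (φ r) \ E) = 0

/-- Membership in the class `𝒦_{ψ₁,ψ₂,f,g}(Ω)`. -/
def memK (μ H : Measure X) (Ω : Set X) (ψ₁ ψ₂ : X → EReal) (f g : X → ℝ)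
    (u : X → ℝ) : Prop :=
  MeasureTheory.IntegrableOn u Ω μ ∧ TV μ u Ω < ⊤ ∧
  (∀ᵐ x ∂μ.restrict Ω, ψ₁ x ≤ (u x : EReal) ∧ (u x : EReal) ≤ ψ₂ x) ∧
  (∀ᵐ z ∂H.restrict (frontier Ω), ∃ t : ℝ, HasTraceAt μ Ω u z t ∧ f z ≤ t ∧ t ≤ g z)

/-- Strong solution to the `𝒦_{ψ₁,ψ₂,f,g}`-obstacle problem. -/
def IsStrongSolution (μ H : Measure X) (Ω : Set X) (ψ₁ ψ₂ : X → EReal) (f g : X → ℝ)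
    (u : X → ℝ) : Prop :=
  memK μ H Ω ψ₁ ψ₂ f g u ∧ ∀ v, memK μ H Ω ψ₁ ψ₂ f g v → TV μ u Ω ≤ TV μ v Ω

/-- Minimal strong solution to the `𝒦_{ψ₁,ψ₂,f,g}`-obstacle problem. -/
def IsMinimalStrongSolution (μ H : Measure X) (Ω : Set X) (ψ₁ ψ₂ : X → EReal)
    (f g : X → ℝ) (u : X → ℝ) : Prop :=
  IsStrongSolution μ H Ω ψ₁ ψ₂ f g u ∧
  ∀ v, IsStrongSolution μ H Ω ψ₁ ψ₂ f g v → ∀ᵐ x ∂μ.restrict Ω, u x ≤ v x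

/-- Maximal strong solution to the `𝒦_{ψ₁,ψ₂,f,g}`-obstacle problem. -/
def IsMaximalStrongSolution (μ H : Measure X) (Ω : Set X) (ψ₁ ψ₂ : X → EReal)
    (f g : X → ℝ) (u : X → ℝ) : Prop :=
  IsStrongSolution μ H Ω ψ₁ ψ₂ f g u ∧
  ∀ v, IsStrongSolution μ H Ω ψ₁ ψ₂ f g v → ∀ᵐ x ∂μ.restrict Ω, v x ≤ u x

/-- Characteristic function of a set, viewed as an `EReal`-valued obstacle. -/
noncomputable def setObstacle (A : Set X) : X → EReal :=
  fun x => ((A.indicator (fun _ => (1:ℝ)) x : ℝ) : EReal)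

/-- Membership in the class `𝒦_{A,B,F,G}(Ω)` (characteristic-function data). -/
def memKSet (μ H : Measure X) (Ω A B F G : Set X) (u : X → ℝ) : Prop :=
  memK μ H Ω (setObstacle A) (setObstacle B)
    (F.indicator fun _ => (1:ℝ)) (G.indicator fun _ => (1:ℝ)) u

/-- `E` is a strong solution set to the `𝒦_{A,B,F,G}`-obstacle problem. -/
def IsStrongSolutionSet (μ H : Measure X) (Ω A B F G : Set X) (E : Set X) : Prop :=
  memKSet μ H Ω A B F G (E.indicator fun _ => (1:ℝ)) ∧
  ∀ v, memKSet μ H Ω A B F G v →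
    TV μ (E.indicator fun _ => (1:ℝ)) Ω ≤ TV μ v Ω

/-- `E` is the minimal strong solution set to the `𝒦_{A,B,F,G}`-obstacle problem. -/
def IsMinimalStrongSolutionSet (μ H : Measure X) (Ω A B F G : Set X) (E : Set X) : Prop :=
  IsStrongSolutionSet μ H Ω A B F G E ∧
  ∀ E', IsStrongSolutionSet μ H Ω A B F G E' → μ (E \ E') = 0

/-- Membership in `𝒦̃_{A,B,F,G}(Ω)`: pointwise everywhere obstacle and boundary
constraints, for characteristic-function data. -/
def memKt (Ω A B F G : Set X) (u : X → ℝ) : Prop :=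
  (∀ x ∈ Ω, A.indicator (fun _ => (1:ℝ)) x ≤ u x ∧ u x ≤ B.indicator (fun _ => (1:ℝ)) x) ∧
  (∀ x ∉ Ω, F.indicator (fun _ => (1:ℝ)) x ≤ u x ∧ u x ≤ G.indicator (fun _ => (1:ℝ)) x)

/-- `u` is an `ε`-weak solution to the `𝒦_{A,B,F,G}`-obstacle problem. -/
def IsEpsWeakSolution (μ : Measure X) (Ω A B F G : Set X) (ε : ℝ) (u : X → ℝ) : Prop :=
  memKt Ω A B F G u ∧ MeasureTheory.LocallyIntegrable u μ ∧
  ∀ v, memKt Ω A B F G v → MeasureTheory.LocallyIntegrable v μ →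
    TV μ u (Metric.thickening ε Ω) ≤ TV μ v (Metric.thickening ε Ω)

/-- Membership in the Dirichlet class with boundary data `h`. -/
def memD (μ H : Measure X) (Ω : Set X) (h : X → ℝ) (u : X → ℝ) : Prop :=
  MeasureTheory.IntegrableOn u Ω μ ∧ TV μ u Ω < ⊤ ∧
  ∀ᵐ z ∂H.restrict (frontier Ω), HasTraceAt μ Ω u z (h z)

/-- Strong solution to the Dirichlet problem for least gradients with data `h`. -/
def IsDirichletStrongSolution (μ H : Measure X) (Ω : Set X) (h : X → ℝ)
    (u : X → ℝ) : Prop :=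
  memD μ H Ω h u ∧ ∀ v, memD μ H Ω h v → TV μ u Ω ≤ TV μ v Ω

end Prelude

/-!
For a shift `ε > 0`, `min u₁ (u₂ + ε)` is admissible for the first problem and
`max u₂ (u₁ - ε)` for the second. Submodularity of the total variation under `min`/`max`,
together with the optimality of `u₂`, shows that `min u₁ (u₂ + ε)` is again a strong solution of
the first problem, so minimality of `u₁` gives `u₁ ≤ u₂ + ε`; then let `ε → 0`.

Submodularity is proved on the locally Lipschitz approximations defining the total variation:
off the coincidence set of two approximants `v` and `w`, `min v w` and `max v w` locally agree
with `v` or `w`. Choosing `ε` outside a countable set makes all these coincidence sets null.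
-/

open Metric

section Lattice

variable {α : Type*} [AddCommGroup α] [LinearOrder α] [IsOrderedAddMonoid α]

theorem abs_min_sub_min_le_add (a b c d : α) : |min a b - min c d| ≤ |a - c| + |b - d| :=
  (abs_min_sub_min_le_max a b c d).trans (max_le_add_of_nonneg (abs_nonneg _) (abs_nonneg _))

theorem abs_max_sub_max_le_add (a b c d : α) : |max a b - max c d| ≤ |a - c| + |b - d| :=
  (abs_max_sub_max_le_max a b c d).trans (max_le_add_of_nonneg (abs_nonneg _) (abs_nonneg _))

end Lattice

theorem ENNReal.le_liminf_add {u v : ℕ → ℝ≥0∞} :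
    liminf u atTop + liminf v atTop ≤ liminf (fun n => u n + v n) atTop := by
  simp only [liminf_eq_iSup_iInf_of_nat]
  refine ENNReal.iSup_add_iSup_le fun n m => le_iSup_of_le (max n m) (le_iInf₂ fun i hi => ?_)
  exact add_le_add (iInf₂_le i ((le_max_left n m).trans hi))
    (iInf₂_le i ((le_max_right n m).trans hi))

section Measure

variable {α : Type*} [MeasurableSpace α] {μ : Measure α}

theorem ae_le_of_forall_ae_le_add_of_countable {f g : α → ℝ} {S : Set ℝ} (hS : S.Countable)
    (h : ∀ ε, 0 < ε → ε ∉ S → ∀ᵐ x ∂μ, f x ≤ g x + ε) : ∀ᵐ x ∂μ, f x ≤ g x := by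
  have hgood : ∀ n : ℕ, ∃ ε ∈ Sᶜ, ε ∈ Ioo 0 (1 / ((n : ℝ) + 1)) := fun n =>
    (hS.dense_compl ℝ).exists_mem_open isOpen_Ioo (nonempty_Ioo.2 (by positivity))
  choose ε hεS hε using hgood
  have hε0 : Tendsto ε atTop (𝓝 0) :=
    squeeze_zero (fun n => (hε n).1.le) (fun n => (hε n).2.le)
      tendsto_one_div_add_atTop_nhds_zero_nat
  filter_upwards [ae_all_iff.2 fun n => h (ε n) (hε n).1 (hεS n)] with x hx
  exact ge_of_tendsto' (by simpa using tendsto_const_nhds.add hε0) hx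

theorem setIntegral_abs_le_add {s : Set α} {f a b : α → ℝ} (ha : IntegrableOn a s μ)
    (hb : IntegrableOn b s μ) (h : ∀ x, |f x| ≤ |a x| + |b x|) :
    ∫ x in s, |f x| ∂μ ≤ (∫ x in s, |a x| ∂μ) + ∫ x in s, |b x| ∂μ := by
  rw [← integral_add ha.abs hb.abs]
  exact integral_mono_of_nonneg (ae_of_all _ fun _ => abs_nonneg _) (ha.abs.add hb.abs)
    (ae_of_all _ h)

end Measure

section Analysis

variable {X : Type*} [MetricSpace X]

theorem lipConst_congr {f g : X → ℝ} {x : X} (h : f =ᶠ[𝓝 x] g) :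
    lipConst f x = lipConst g x := by
  obtain ⟨r₀, hr₀, hfg⟩ := eventually_nhds_iff_ball.1 h
  refine limsup_congr ?_
  filter_upwards [Ioo_mem_nhdsGT hr₀] with r hr
  refine iSup_congr fun y => iSup_congr fun hy => ?_
  rw [hfg y (ball_subset_ball hr.2.le hy), hfg x (mem_ball_self hr₀)]

theorem lipConst_add_const (f : X → ℝ) (c : ℝ) : lipConst (fun y => f y + c) = lipConst f := by
  funext x
  simp only [lipConst, add_sub_add_right_eq_sub]

variable [MeasurableSpace X] {μ : Measure X}

theorem IsDoubling.measure_ne_top_of_isBounded (hμ : IsDoubling μ) {s : Set X}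
    (hs : Bornology.IsBounded s) : μ s ≠ ⊤ := by
  rcases s.eq_empty_or_nonempty with rfl | ⟨x, -⟩
  · simp
  obtain ⟨C, hC, hball⟩ := hμ
  obtain ⟨r, hr, hsr⟩ := hs.subset_ball_lt 0 x
  have hfin : C * μ (ball x r) < ⊤ := (hball x r hr).2.2
  exact ((measure_mono hsr).trans_lt
    ((le_mul_of_one_le_left (by positivity) hC).trans_lt hfin)).ne

theorem Continuous.integrableOn_of_isCompact {f : X → ℝ} {K : Set X} [OpensMeasurableSpace X]
    (hf : Continuous f) (hK : IsCompact K) (hμK : μ K ≠ ⊤) : IntegrableOn f K μ := by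
  obtain ⟨C, hC⟩ := hK.exists_bound_of_continuousOn hf.continuousOn
  exact Measure.integrableOn_of_bounded hμK hf.aestronglyMeasurable
    ((ae_restrict_iff' hK.measurableSet).2 (ae_of_all _ hC))

section Trace

variable {Ω : Set X} {u v : X → ℝ} {z : X} {t s : ℝ}

theorem HasTraceAt.add_const (h : HasTraceAt μ Ω u z t) (c : ℝ) :
    HasTraceAt μ Ω (fun x => u x + c) z (t + c) := by
  simpa only [HasTraceAt, add_sub_add_right_eq_sub] using h

theorem HasTraceAt.comp₂ (op : ℝ → ℝ → ℝ)
    (hop : ∀ a b c d, |op a b - op c d| ≤ |a - c| + |b - d|) (hΩ : μ Ω ≠ ⊤)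
    (hu : IntegrableOn u Ω μ) (hv : IntegrableOn v Ω μ)
    (hut : HasTraceAt μ Ω u z t) (hvs : HasTraceAt μ Ω v z s) :
    HasTraceAt μ Ω (fun x => op (u x) (v x)) z (op t s) := by
  refine squeeze_zero (fun r => ?_) (fun r => ?_) (by simpa using hut.add hvs)
  · rw [setAverage_eq, smul_eq_mul]
    exact mul_nonneg (by positivity) (integral_nonneg fun _ => abs_nonneg _)
  · have hK : μ (ball z r ∩ Ω) ≠ ⊤ := measure_ne_top_of_subset inter_subset_right hΩ
    have hbound := setIntegral_abs_le_add (f := fun y => op (u y) (v y) - op t s)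
      ((hu.mono_set inter_subset_right).sub (integrableOn_const hK))
      ((hv.mono_set inter_subset_right).sub (integrableOn_const hK)) (fun y => hop _ _ _ _)
    simp only [setAverage_eq, smul_eq_mul, ← mul_add]
    exact mul_le_mul_of_nonneg_left hbound (by positivity)

end Trace

section LipConst

variable [OpensMeasurableSpace X]

theorem setLIntegral_lipConst_congr {U : Set X} (hU : IsOpen U) {f g : X → ℝ}
    (h : EqOn f g U) :
    ∫⁻ x in U, lipConst f x ∂μ = ∫⁻ x in U, lipConst g x ∂μ :=
  setLIntegral_congr_fun hU.measurableSet fun _ hx =>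
    lipConst_congr (eventuallyEq_of_mem (hU.mem_nhds hx) h)

theorem lintegral_lipConst_min_add_max {Ω : Set X} (hΩ : IsOpen Ω) {v w : X → ℝ}
    (hv : Continuous v) (hw : Continuous w) (hvw : ∀ᵐ x ∂μ.restrict Ω, v x ≠ w x) :
    ∫⁻ x in Ω, lipConst (fun y => min (v y) (w y)) x ∂μ +
        ∫⁻ x in Ω, lipConst (fun y => max (v y) (w y)) x ∂μ =
      ∫⁻ x in Ω, lipConst v x ∂μ + ∫⁻ x in Ω, lipConst w x ∂μ := by
  set A : Set X := Ω ∩ {x | v x < w x}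
  set B : Set X := Ω ∩ {x | w x < v x}
  have hA : IsOpen A := hΩ.inter (isOpen_lt hv hw)
  have hB : IsOpen B := hΩ.inter (isOpen_lt hw hv)
  have hAB : Disjoint A B :=
    disjoint_left.2 fun x hxA hxB => lt_asymm (show v x < w x from hxA.2) hxB.2
  have hcover : Ω =ᵐ[μ] (A ∪ B : Set X) := by
    have hnull := ae_iff.1 ((ae_restrict_iff' hΩ.measurableSet).1 hvw)
    refine ae_eq_set.2 ⟨measure_mono_null ?_ hnull, ?_⟩
    · rintro x ⟨hxΩ, hxAB⟩ hne
      rcases (hne hxΩ).lt_or_gt with h | h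
      exacts [hxAB (Or.inl ⟨hxΩ, h⟩), hxAB (Or.inr ⟨hxΩ, h⟩)]
    · rw [sdiff_eq_empty.2 (union_subset inter_subset_left inter_subset_left), measure_empty]
  have hsplit (f : X → ℝ≥0∞) :
      ∫⁻ x in Ω, f x ∂μ = ∫⁻ x in A, f x ∂μ + ∫⁻ x in B, f x ∂μ := by
    rw [setLIntegral_congr hcover, lintegral_union hB.measurableSet hAB]
  rw [hsplit, hsplit, hsplit (lipConst v), hsplit (lipConst w),
    setLIntegral_lipConst_congr hA (g := v) fun y hy => min_eq_left hy.2.le,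
    setLIntegral_lipConst_congr hB (g := w) fun y hy => min_eq_right hy.2.le,
    setLIntegral_lipConst_congr hA (g := w) fun y hy => max_eq_right hy.2.le,
    setLIntegral_lipConst_congr hB (g := v) fun y hy => max_eq_left hy.2.le]
  ring

end LipConst

section TotalVariation

/-- The admissible sequences in the infimum defining `TV μ u U`. -/
def IsLipApprox (μ : Measure X) (U : Set X) (u : X → ℝ) (v : ℕ → X → ℝ) : Prop :=
  (∀ n, LocallyLipschitz (v n)) ∧
    ∀ K ⊆ U, IsCompact K → Tendsto (fun n => ∫ x in K, |v n x - u x| ∂μ) atTop (𝓝 0)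

variable {U : Set X} {u u' : X → ℝ} {v w : ℕ → X → ℝ}

theorem TV_le_liminf (hv : IsLipApprox μ U u v) :
    TV μ u U ≤ liminf (fun n => ∫⁻ x in U, lipConst (v n) x ∂μ) atTop :=
  iInf₂_le v hv

theorem exists_isLipApprox_lintegral_le (hTV : TV μ u U ≠ ⊤) {δ : ℝ≥0∞} (hδ : δ ≠ 0) :
    ∃ v, IsLipApprox μ U u v ∧ ∀ n, ∫⁻ x in U, lipConst (v n) x ∂μ ≤ TV μ u U + δ := by
  obtain ⟨v, hlt⟩ := iInf_lt_iff.1 (ENNReal.lt_add_right hTV hδ)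
  obtain ⟨hv, hlt⟩ := iInf_lt_iff.1 hlt
  obtain ⟨φ, hφ, hφlt⟩ :=
    extraction_of_frequently_atTop (frequently_lt_of_liminf_lt (by isBoundedDefault) hlt)
  refine ⟨fun n => v (φ n), ⟨fun n => hv.1 (φ n), fun K hKU hK => ?_⟩, fun n => (hφlt n).le⟩
  exact (hv.2 K hKU hK).comp hφ.tendsto_atTop

theorem IsLipApprox.add_const (hv : IsLipApprox μ U u v) (c : ℝ) :
    IsLipApprox μ U (fun x => u x + c) (fun n x => v n x + c) :=
  ⟨fun n => (hv.1 n).add (LocallyLipschitz.const c), fun K hKU hK => by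
    simpa only [add_sub_add_right_eq_sub] using hv.2 K hKU hK⟩

theorem TV_add_const (u : X → ℝ) (U : Set X) (c : ℝ) :
    TV μ (fun x => u x + c) U = TV μ u U := by
  have hle (u : X → ℝ) (c : ℝ) : TV μ (fun x => u x + c) U ≤ TV μ u U :=
    le_iInf₂ fun v hv => by
      simpa only [lipConst_add_const] using TV_le_liminf (IsLipApprox.add_const hv c)
  refine (hle u c).antisymm ?_
  simpa only [add_neg_cancel_right] using hle (fun x => u x + c) (-c)

variable [OpensMeasurableSpace X]

theorem IsLipApprox.tendsto_comp₂ (op : ℝ → ℝ → ℝ)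
    (hop : ∀ a b c d, |op a b - op c d| ≤ |a - c| + |b - d|) (hUfin : μ U ≠ ⊤)
    (hu : IntegrableOn u U μ) (hu' : IntegrableOn u' U μ)
    (hv : IsLipApprox μ U u v) (hw : IsLipApprox μ U u' w) {K : Set X} (hKU : K ⊆ U)
    (hK : IsCompact K) :
    Tendsto (fun n => ∫ x in K, |op (v n x) (w n x) - op (u x) (u' x)| ∂μ) atTop (𝓝 0) := by
  have hμK : μ K ≠ ⊤ := measure_ne_top_of_subset hKU hUfin
  refine squeeze_zero (fun n => integral_nonneg fun _ => abs_nonneg _) (fun n => ?_)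
    (by simpa using (hv.2 K hKU hK).add (hw.2 K hKU hK))
  exact setIntegral_abs_le_add
    (((hv.1 n).continuous.integrableOn_of_isCompact hK hμK).sub (hu.mono_set hKU))
    (((hw.1 n).continuous.integrableOn_of_isCompact hK hμK).sub (hu'.mono_set hKU))
    fun x => hop _ _ _ _

theorem IsLipApprox.min (hUfin : μ U ≠ ⊤) (hu : IntegrableOn u U μ) (hu' : IntegrableOn u' U μ)
    (hv : IsLipApprox μ U u v) (hw : IsLipApprox μ U u' w) :
    IsLipApprox μ U (fun x => min (u x) (u' x)) (fun n x => min (v n x) (w n x)) :=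
  ⟨fun n => (hv.1 n).min (hw.1 n), fun _ hKU hK =>
    hv.tendsto_comp₂ Min.min abs_min_sub_min_le_add hUfin hu hu' hw hKU hK⟩

theorem IsLipApprox.max (hUfin : μ U ≠ ⊤) (hu : IntegrableOn u U μ) (hu' : IntegrableOn u' U μ)
    (hv : IsLipApprox μ U u v) (hw : IsLipApprox μ U u' w) :
    IsLipApprox μ U (fun x => max (u x) (u' x)) (fun n x => max (v n x) (w n x)) :=
  ⟨fun n => (hv.1 n).max (hw.1 n), fun _ hKU hK =>
    hv.tendsto_comp₂ Max.max abs_max_sub_max_le_add hUfin hu hu' hw hKU hK⟩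

theorem TV_min_add_TV_max_le_of_isLipApprox (hU : IsOpen U) (hUfin : μ U ≠ ⊤)
    (hu : IntegrableOn u U μ) (hu' : IntegrableOn u' U μ)
    (hv : IsLipApprox μ U u v) (hw : IsLipApprox μ U u' w)
    (hvw : ∀ n, ∀ᵐ x ∂μ.restrict U, v n x ≠ w n x) {a b : ℝ≥0∞}
    (ha : ∀ n, ∫⁻ x in U, lipConst (v n) x ∂μ ≤ a)
    (hb : ∀ n, ∫⁻ x in U, lipConst (w n) x ∂μ ≤ b) :
    TV μ (fun x => min (u x) (u' x)) U + TV μ (fun x => max (u x) (u' x)) U ≤ a + b :=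
  calc TV μ (fun x => min (u x) (u' x)) U + TV μ (fun x => max (u x) (u' x)) U
      ≤ liminf (fun n => ∫⁻ x in U, lipConst (fun y => min (v n y) (w n y)) x ∂μ) atTop +
          liminf (fun n => ∫⁻ x in U, lipConst (fun y => max (v n y) (w n y)) x ∂μ) atTop :=
        add_le_add (TV_le_liminf (hv.min hUfin hu hu' hw))
          (TV_le_liminf (hv.max hUfin hu hu' hw))
    _ ≤ liminf (fun n => ∫⁻ x in U, lipConst (fun y => min (v n y) (w n y)) x ∂μ +
          ∫⁻ x in U, lipConst (fun y => max (v n y) (w n y)) x ∂μ) atTop :=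
        ENNReal.le_liminf_add
    _ = liminf (fun n => ∫⁻ x in U, lipConst (v n) x ∂μ + ∫⁻ x in U, lipConst (w n) x ∂μ)
          atTop := by
        simp only [lintegral_lipConst_min_add_max hU (hv.1 _).continuous (hw.1 _).continuous
          (hvw _)]
    _ ≤ a + b := liminf_le_of_le (by isBoundedDefault) fun c hc =>
        let ⟨n, hn⟩ := hc.exists
        hn.trans (add_le_add (ha n) (hb n))

theorem exists_countable_TV_min_add_TV_max_le (hU : IsOpen U) (hUfin : μ U ≠ ⊤)
    (hu : IntegrableOn u U μ) (hu' : IntegrableOn u' U μ) (hTV : TV μ u U ≠ ⊤)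
    (hTV' : TV μ u' U ≠ ⊤) :
    ∃ S : Set ℝ, S.Countable ∧ ∀ ε ∉ S,
      TV μ (fun x => min (u x) (u' x + ε)) U + TV μ (fun x => max (u x) (u' x + ε)) U ≤
        TV μ u U + TV μ u' U := by
  have hδ (m : ℕ) : (m : ℝ≥0∞)⁻¹ ≠ 0 := ENNReal.inv_ne_zero.2 (ENNReal.natCast_ne_top m)
  choose v hv hva using fun m => exists_isLipApprox_lintegral_le hTV (hδ m)
  choose w hw hwa using fun m => exists_isLipApprox_lintegral_le hTV' (hδ m)
  have : IsFiniteMeasure (μ.restrict U) := isFiniteMeasure_restrict.2 hUfin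
  refine ⟨⋃ m, ⋃ n, {ε | 0 < μ.restrict U {x | v m n x - w m n x = ε}},
    countable_iUnion fun m => countable_iUnion fun n => Measure.countable_meas_level_set_pos
      (((hv m).1 n).continuous.sub ((hw m).1 n).continuous).measurable, fun ε hε => ?_⟩
  have hvw (m n : ℕ) : ∀ᵐ x ∂μ.restrict U, v m n x ≠ w m n x + ε := by
    simp only [mem_iUnion, mem_ofPred_eq, not_exists, not_lt, nonpos_iff_eq_zero] at hε
    simpa only [ae_iff, not_not, ← sub_eq_iff_eq_add'] using hε m n
  have hlim : Tendsto (fun m : ℕ => TV μ u U + (m : ℝ≥0∞)⁻¹ + (TV μ u' U + (m : ℝ≥0∞)⁻¹))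
      atTop (𝓝 (TV μ u U + TV μ u' U)) := by
    simpa using (tendsto_const_nhds.add ENNReal.tendsto_inv_nat_nhds_zero).add
      (tendsto_const_nhds.add ENNReal.tendsto_inv_nat_nhds_zero)
  refine ge_of_tendsto' hlim fun m => ?_
  refine TV_min_add_TV_max_le_of_isLipApprox hU hUfin hu (hu'.add (integrableOn_const hUfin))
    (hv m) ((hw m).add_const ε) (hvw m) (hva m) fun n => ?_
  simpa only [lipConst_add_const] using hwa m n

end TotalVariation

end Analysis

section ObstacleProblem

variable {X : Type*} [MetricSpace X] [MeasurableSpace X] {μ H : Measure X} {Ω : Set X}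
  {ψ φ : X → EReal} {f g : X → ℝ} {u v : X → ℝ}

theorem memK.min (hu : memK μ H Ω ψ φ f g u) (hΩ : μ Ω ≠ ⊤) (hv : IntegrableOn v Ω μ)
    (hTV : TV μ (fun x => min (u x) (v x)) Ω < ⊤) (hψv : ∀ᵐ x ∂μ.restrict Ω, ψ x ≤ v x)
    (hfv : ∀ᵐ z ∂H.restrict (frontier Ω), ∃ s, HasTraceAt μ Ω v z s ∧ f z ≤ s) :
    memK μ H Ω ψ φ f g (fun x => min (u x) (v x)) := by
  obtain ⟨hui, _, huobs, hutr⟩ := hu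
  refine ⟨hui.inf hv, hTV, ?_, ?_⟩
  · filter_upwards [huobs, hψv] with x ⟨hψu, huφ⟩ hψv
    refine ⟨?_, (EReal.coe_le_coe_iff.2 (min_le_left _ _)).trans huφ⟩
    rcases min_choice (u x) (v x) with h | h <;> rw [h] <;> assumption
  · filter_upwards [hutr, hfv] with z ⟨t, ht, hft, htg⟩ ⟨s, hs, hfs⟩
    exact ⟨Min.min t s, ht.comp₂ Min.min abs_min_sub_min_le_add hΩ hui hv hs, le_min hft hfs,
      (min_le_left _ _).trans htg⟩

theorem memK.max (hu : memK μ H Ω ψ φ f g u) (hΩ : μ Ω ≠ ⊤) (hv : IntegrableOn v Ω μ)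
    (hTV : TV μ (fun x => max (u x) (v x)) Ω < ⊤) (hvφ : ∀ᵐ x ∂μ.restrict Ω, v x ≤ φ x)
    (hvg : ∀ᵐ z ∂H.restrict (frontier Ω), ∃ s, HasTraceAt μ Ω v z s ∧ s ≤ g z) :
    memK μ H Ω ψ φ f g (fun x => max (u x) (v x)) := by
  obtain ⟨hui, _, huobs, hutr⟩ := hu
  refine ⟨hui.sup hv, hTV, ?_, ?_⟩
  · filter_upwards [huobs, hvφ] with x ⟨hψu, huφ⟩ hvφ
    refine ⟨hψu.trans (EReal.coe_le_coe_iff.2 (le_max_left _ _)), ?_⟩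
    rcases max_choice (u x) (v x) with h | h <;> rw [h] <;> assumption
  · filter_upwards [hutr, hvg] with z ⟨t, ht, hft, htg⟩ ⟨s, hs, hsg⟩
    exact ⟨Max.max t s, ht.comp₂ Max.max abs_max_sub_max_le_add hΩ hui hv hs,
      hft.trans (le_max_left _ _), max_le htg hsg⟩

theorem IsMinimalStrongSolution.ae_le_of_memK_of_TV_le
    (hu : IsMinimalStrongSolution μ H Ω ψ φ f g u) (hv : memK μ H Ω ψ φ f g v)
    (hTV : TV μ v Ω ≤ TV μ u Ω) : ∀ᵐ x ∂μ.restrict Ω, u x ≤ v x :=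
  hu.2 v ⟨hv, fun w hw => hTV.trans (hu.1.2 w hw)⟩

theorem IsMinimalStrongSolution.ae_le_add_of_TV_min_add_TV_max_le
    {ψ₁ ψ₂ φ₁ φ₂ : X → EReal} {f₁ f₂ g₁ g₂ u₁ u₂ : X → ℝ} (hΩ : μ Ω ≠ ⊤)
    (hbd : ∀ᵐ z ∂H.restrict (frontier Ω), f₁ z ≤ f₂ z ∧ g₁ z ≤ g₂ z)
    (hobs : ∀ᵐ x ∂μ.restrict Ω, ψ₁ x ≤ ψ₂ x ∧ φ₁ x ≤ φ₂ x)
    (hu₁ : IsMinimalStrongSolution μ H Ω ψ₁ φ₁ f₁ g₁ u₁)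
    (hu₂ : IsStrongSolution μ H Ω ψ₂ φ₂ f₂ g₂ u₂) {ε : ℝ} (hε : 0 ≤ ε)
    (hsub : TV μ (fun x => min (u₁ x) (u₂ x + ε)) Ω + TV μ (fun x => max (u₁ x) (u₂ x + ε)) Ω ≤
      TV μ u₁ Ω + TV μ u₂ Ω) :
    ∀ᵐ x ∂μ.restrict Ω, u₁ x ≤ u₂ x + ε := by
  obtain ⟨hm₂, hopt₂⟩ := hu₂
  have hm₁ := hu₁.1.1
  have hfin : TV μ u₁ Ω + TV μ u₂ Ω < ⊤ := ENNReal.add_lt_top.2 ⟨hm₁.2.1, hm₂.2.1⟩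
  have hTVmax : TV μ (fun x => max (u₂ x) (u₁ x + -ε)) Ω =
      TV μ (fun x => max (u₁ x) (u₂ x + ε)) Ω := by
    rw [← TV_add_const (fun x => max (u₁ x) (u₂ x + ε)) Ω (-ε)]
    simp only [max_comm (u₂ _), ← max_add_add_right, add_neg_cancel_right]
  have hmin : memK μ H Ω ψ₁ φ₁ f₁ g₁ (fun x => min (u₁ x) (u₂ x + ε)) := by
    refine hm₁.min hΩ (hm₂.1.add (integrableOn_const hΩ))
      ((le_self_add.trans hsub).trans_lt hfin) ?_ ?_
    · filter_upwards [hobs, hm₂.2.2.1] with x ⟨hψ, _⟩ ⟨hψu, _⟩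
      exact hψ.trans (hψu.trans (EReal.coe_le_coe_iff.2 (le_add_of_nonneg_right hε)))
    · filter_upwards [hbd, hm₂.2.2.2] with z ⟨hf, _⟩ ⟨t, ht, hft, _⟩
      exact ⟨t + ε, ht.add_const ε, hf.trans (hft.trans (le_add_of_nonneg_right hε))⟩
  have hmax : memK μ H Ω ψ₂ φ₂ f₂ g₂ (fun x => max (u₂ x) (u₁ x + -ε)) := by
    refine hm₂.max hΩ (hm₁.1.add (integrableOn_const hΩ))
      (hTVmax ▸ (le_add_self.trans hsub).trans_lt hfin) ?_ ?_
    · filter_upwards [hobs, hm₁.2.2.1] with x ⟨_, hφ⟩ ⟨_, huφ⟩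
      exact (EReal.coe_le_coe_iff.2 (add_le_of_nonpos_right (neg_nonpos.2 hε))).trans
        (huφ.trans hφ)
    · filter_upwards [hbd, hm₁.2.2.2] with z ⟨_, hg⟩ ⟨t, ht, _, htg⟩
      exact ⟨t + -ε, ht.add_const (-ε),
        (add_le_of_nonpos_right (neg_nonpos.2 hε)).trans (htg.trans hg)⟩
  have hTVmin : TV μ (fun x => min (u₁ x) (u₂ x + ε)) Ω ≤ TV μ u₁ Ω := by
    refine ENNReal.le_of_add_le_add_right hm₂.2.1.ne (le_trans ?_ hsub)
    exact add_le_add_right (hTVmax ▸ hopt₂ _ hmax) _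
  filter_upwards [hu₁.ae_le_of_memK_of_TV_le hmin hTVmin] with x hx
  exact hx.trans (min_le_right _ _)

end ObstacleProblem

theorem comparison_minimal_strong_solutions_general {X : Type*} [MetricSpace X] [MeasurableSpace X]
    [BorelSpace X] (μ H : Measure X)
    (hμ : IsDoubling μ)
    (Ω : Set X) (hΩo : IsOpen Ω) (hΩb : Bornology.IsBounded Ω)
    (ψ₁ ψ₂ φ₁ φ₂ : X → EReal)
    (f₁ f₂ g₁ g₂ : X → ℝ)
    (hbd : ∀ᵐ z ∂H.restrict (frontier Ω), f₁ z ≤ f₂ z ∧ g₁ z ≤ g₂ z)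
    (hobs : ∀ᵐ x ∂μ.restrict Ω, ψ₁ x ≤ ψ₂ x ∧ φ₁ x ≤ φ₂ x)
    (u₁ u₂ : X → ℝ)
    (hu₁ : IsMinimalStrongSolution μ H Ω ψ₁ φ₁ f₁ g₁ u₁)
    (hu₂ : IsStrongSolution μ H Ω ψ₂ φ₂ f₂ g₂ u₂) :
    ∀ᵐ x ∂μ.restrict Ω, u₁ x ≤ u₂ x := by
  have hΩfin : μ Ω ≠ ⊤ := hμ.measure_ne_top_of_isBounded hΩb
  obtain ⟨S, hS, hsub⟩ := exists_countable_TV_min_add_TV_max_le hΩo hΩfin hu₁.1.1.1 hu₂.1.1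
    hu₁.1.1.2.1.ne hu₂.1.2.1.ne
  exact ae_le_of_forall_ae_le_add_of_countable hS fun ε hε hεS =>
    hu₁.ae_le_add_of_TV_min_add_TV_max_le hΩfin hbd hobs hu₂ hε.le (hsub ε hεS)

/-- comparison: the minimal strong solution for the smaller data lies
below any strong solution for the larger data. -/
theorem comparison_minimal_strong_solutions {X : Type*} [MetricSpace X] [MeasurableSpace X]
    [BorelSpace X] [CompleteSpace X] (μ H : Measure X)
    (hμ : IsDoubling μ)
    (hH : ∀ s : Set X, H s = codimOneHausdorff μ s)
    (Ω : Set X) (hΩo : IsOpen Ω) (hΩc : IsConnected Ω) (hΩb : Bornology.IsBounded Ω)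
    (hΩm : μ Ωᶜ ≠ 0)
    (hHfin : H (frontier Ω) < ⊤)
    (hHdbl : BoundaryDoubling H Ω)
    (hAR : LowerCodimOneAR μ H Ω)
    (hpts : ∀ z ∈ frontier Ω, H {z} = 0)
    (hunif : ∃ A : ℝ, IsUniformDomain Ω A)
    (hpmc : PosMeanCurvature μ Ω)
    (ψ₁ ψ₂ φ₁ φ₂ : X → EReal)
    (hψ₁ : ContinuousOn ψ₁ (closure Ω)) (hψ₂ : ContinuousOn ψ₂ (closure Ω))
    (hφ₁ : ContinuousOn φ₁ (closure Ω)) (hφ₂ : ContinuousOn φ₂ (closure Ω))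
    (f₁ f₂ g₁ g₂ : X → ℝ)
    (hf₁ : ContinuousOn f₁ (frontier Ω)) (hf₂ : ContinuousOn f₂ (frontier Ω))
    (hg₁ : ContinuousOn g₁ (frontier Ω)) (hg₂ : ContinuousOn g₂ (frontier Ω))
    (hbd : ∀ᵐ z ∂H.restrict (frontier Ω), f₁ z ≤ f₂ z ∧ g₁ z ≤ g₂ z)
    (hobs : ∀ᵐ x ∂μ.restrict Ω, ψ₁ x ≤ ψ₂ x ∧ φ₁ x ≤ φ₂ x)
    (hne₁ : ∃ w, memK μ H Ω ψ₁ φ₁ f₁ g₁ w)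
    (hne₂ : ∃ w, memK μ H Ω ψ₂ φ₂ f₂ g₂ w)
    (u₁ u₂ : X → ℝ)
    (hu₁ : IsMinimalStrongSolution μ H Ω ψ₁ φ₁ f₁ g₁ u₁)
    (hu₂ : IsStrongSolution μ H Ω ψ₂ φ₂ f₂ g₂ u₂) :
    ∀ᵐ x ∂μ.restrict Ω, u₁ x ≤ u₂ x :=
  comparison_minimal_strong_solutions_general μ H hμ Ω hΩo hΩb ψ₁ ψ₂ φ₁ φ₂ f₁ f₂ g₁ g₂ hbd hobs u₁
    u₂ hu₁ hu₂
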